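/- arXiv:1502.00378 — 3 statements merged into one kernel-verified Lean document; each statement's English description precedes it below -/
import Mathlib

section
/- Let g be a finite simple connected graph with vertex set V, and let M be a minimal dominating set of g such that for every vertex p ∈ V \ M, the edge set {{p,q} : q ∈ M and q adjacent to p in g} is a cut-set of g. Then M is a strong minimal dominating set of g, i.e., M is a minimal dominating set of every connected spanning subgraph of g. -/
open SimpleGraph

variable {V : Type*}

/-- `D` is a dominating set of `g`. -/
def IsDomSet (g : SimpleGraph V) (D : Set V) : Prop :=
  ∀ v ∉ D, ∃ u ∈ D, g.Adj v u

/-- `D` is a minimal dominating set of `g`. -/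
def IsMinDomSet (g : SimpleGraph V) (D : Set V) : Prop :=
  IsDomSet g D ∧ ∀ D' ⊂ D, ¬ IsDomSet g D'

/-- `M` is a strong minimal dominating set of `g`: it is a minimal dominating set
of every connected spanning subgraph of `g`. -/
def IsSMDS (g : SimpleGraph V) (M : Set V) : Prop :=
  ∀ h : SimpleGraph V, h ≤ g → h.Connected → IsMinDomSet h M

/-- The set of edges joining `p` to its neighbors in `M`. -/
def domEdges (g : SimpleGraph V) (M : Set V) (p : V) : Set (Sym2 V) :=
  {e | ∃ q ∈ M, g.Adj p q ∧ e = s(p, q)}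

/-- `F` is a cut-set of the connected graph `g`: deleting `F` disconnects `g`. -/
def IsCutSet (g : SimpleGraph V) (F : Set (Sym2 V)) : Prop :=
  ¬ (g.deleteEdges F).Connected

/-!
If a connected spanning subgraph `h` of `g` left some `p ∉ M` without a neighbour in `M`, then `h`
would avoid every edge of `domEdges g M p` and hence sit inside `g` with those edges deleted; that
graph would then be connected, contradicting the cut-set hypothesis. So `M` dominates `h`, and it is
minimal there because any dominating set of `h` also dominates the larger graph `g`.
-/

section

variable {g h : SimpleGraph V} {M : Set V}

theorem IsDomSet.mono (hle : h ≤ g) {D : Set V} (hD : IsDomSet h D) : IsDomSet g D :=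
  fun v hv => (hD v hv).imp fun _ ⟨hu, hadj⟩ => ⟨hu, hle hadj⟩

theorem IsMinDomSet.of_le (hM : IsMinDomSet g M) (hle : h ≤ g) (hdom : IsDomSet h M) :
    IsMinDomSet h M :=
  ⟨hdom, fun D hD hDdom => hM.2 D hD (hDdom.mono hle)⟩

theorem disjoint_edgeSet_domEdges {p : V} (hp : ∀ q ∈ M, ¬ h.Adj p q) :
    Disjoint h.edgeSet (domEdges g M p) := by
  rw [Set.disjoint_left]
  rintro _ hadj ⟨q, hq, -, rfl⟩
  exact hp q hq hadj

theorem isDomSet_of_isCutSet_domEdges (hle : h ≤ g) (hconn : h.Connected)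
    (hcut : ∀ p ∉ M, IsCutSet g (domEdges g M p)) : IsDomSet h M := by
  intro p hp
  by_contra! hnoadj
  have hsub : h ≤ g.deleteEdges (domEdges g M p) := by
    rw [← deleteEdges_eq_self.mpr (disjoint_edgeSet_domEdges hnoadj)]
    exact deleteEdges_mono hle
  exact hcut p hp (hconn.mono hsub)

end

theorem cutsets_give_smds_general (g : SimpleGraph V)
    (M : Set V) (hM : IsMinDomSet g M)
    (hcut : ∀ p ∉ M, IsCutSet g (domEdges g M p)) :
    IsSMDS g M :=
  fun _ hle hconn => hM.of_le hle (isDomSet_of_isCutSet_domEdges hle hconn hcut)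

theorem cutsets_give_smds [Fintype V] (g : SimpleGraph V) (hg : g.Connected)
    (M : Set V) (hM : IsMinDomSet g M)
    (hcut : ∀ p ∉ M, IsCutSet g (domEdges g M p)) :
    IsSMDS g M :=
  cutsets_give_smds_general g M hM hcut
end

section
/- For every n ≥ 3, the complete graph K_n on n vertices admits no strong minimal dominating set. -/
open SimpleGraph

variable {V : Type*}

/-! Since every vertex dominates a complete graph, a minimal dominating set of `Kₙ` is a single
vertex `m`. For `c ≠ m`, the star centred at `c` is a connected spanning subgraph of `Kₙ` in which
`m` is adjacent to `c` only, so `{m}` does not dominate a third vertex. -/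

theorem IsSMDS.isMinDomSet {g : SimpleGraph V} {M : Set V} (hM : IsSMDS g M) (hg : g.Connected) :
    IsMinDomSet g M :=
  hM g le_rfl hg

theorem IsDomSet.nonempty [Nonempty V] {g : SimpleGraph V} {D : Set V} (hD : IsDomSet g D) :
    D.Nonempty := by
  obtain ⟨v⟩ := ‹Nonempty V›
  by_cases hv : v ∈ D
  · exact ⟨v, hv⟩
  · obtain ⟨u, hu, -⟩ := hD v hv
    exact ⟨u, hu⟩

theorem isDomSet_top_singleton (m : V) : IsDomSet (⊤ : SimpleGraph V) {m} :=
  fun _ hv => ⟨m, rfl, by simpa using hv⟩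

theorem IsMinDomSet.eq_singleton_of_mem_top {M : Set V} {m : V}
    (hM : IsMinDomSet (⊤ : SimpleGraph V) M) (hm : m ∈ M) : M = {m} := by
  by_contra hne
  exact hM.2 {m} (Set.ssubset_iff_subset_ne.2 ⟨Set.singleton_subset_iff.2 hm, Ne.symm hne⟩)
    (isDomSet_top_singleton m)

theorem IsMinDomSet.exists_eq_singleton_top [Nonempty V] {M : Set V}
    (hM : IsMinDomSet (⊤ : SimpleGraph V) M) : ∃ m, M = {m} := by
  obtain ⟨m, hm⟩ := hM.1.nonempty
  exact ⟨m, hM.eq_singleton_of_mem_top hm⟩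

theorem IsDomSet.eq_or_eq_of_starGraph_singleton {c m : V} (hD : IsDomSet (starGraph c) {m})
    (hcm : c ≠ m) (w : V) : w = m ∨ w = c := by
  by_cases hwm : w = m
  · exact Or.inl hwm
  · obtain ⟨u, rfl, hadj⟩ := hD w hwm
    exact Or.inr ((starGraph_adj.1 hadj).2.resolve_right hcm.symm)

theorem not_isSMDS_top (hV : 3 ≤ ENat.card V) (M : Set V) : ¬ IsSMDS (⊤ : SimpleGraph V) M := by
  intro hM
  have : Nonempty V := (ENat.one_le_card_iff_nonempty V).1 (le_trans (by norm_num) hV)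
  obtain ⟨m, rfl⟩ := (hM.isMinDomSet connected_top).exists_eq_singleton_top
  obtain ⟨c, hcm, -⟩ := ENat.exists_ne_ne_of_three_le hV m m
  obtain ⟨w, hwm, hwc⟩ := ENat.exists_ne_ne_of_three_le hV m c
  have hstar : IsDomSet (starGraph c) {m} := (hM (starGraph c) le_top (connected_starGraph c)).1
  exact (hstar.eq_or_eq_of_starGraph_singleton hcm w).elim hwm hwc

theorem Kn_no_smds (n : ℕ) (hn : 3 ≤ n) :
    ¬ ∃ M : Set (Fin n), IsSMDS (⊤ : SimpleGraph (Fin n)) M := by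
  rintro ⟨M, hM⟩
  exact not_isSMDS_top (by simpa using hn) M hM
end

section
/- Consider a discrete-time time-varying graph on a finite vertex set V given by a presence function ρ : E × ℕ → Bool on a static edge set E ⊆ V × V. Suppose that for every time t and every pair of distinct vertices p, q there exists a journey from p to q starting after time t (a journey is a finite sequence of edges forming a path from p to q together with strictly increasing times at which each edge is present). Then the eventual underlying graph (V, E^ω), where E^ω is the set of edges e ∈ E such that ρ(e,t) = 1 for infinitely many t, is a connected graph. -/
open SimpleGraph

variable {V : Type*}

/-- A journey in the TVG `(g, ρ)`: `Journey g ρ p q t₁ t₂` means there is a sequence of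
adjacent edges from `p` to `q` crossed at strictly increasing times `t₁ < ⋯ < t₂`,
each edge being present (per `ρ`) at the time it is crossed. -/
inductive Journey (g : SimpleGraph V) (ρ : Sym2 V → ℕ → Bool) : V → V → ℕ → ℕ → Prop
  | single {p q : V} {t : ℕ} (hadj : g.Adj p q) (hρ : ρ s(p, q) t = true) :
      Journey g ρ p q t t
  | cons {p q r : V} {t t' t'' : ℕ} (hadj : g.Adj p q) (hρ : ρ s(p, q) t = true)
      (hlt : t < t') (rest : Journey g ρ q r t' t'') : Journey g ρ p r t t''

/-!
There are finitely many edges, and each edge present only finitely often has a last presence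
time. Past the largest of these times `T`, every present edge lies in `E^ω`, so a journey starting
after `T` is a walk in `(V, E^ω)`.
-/

theorem exists_forall_infinite_of_lt_mem {α : Type*} [Finite α] (s : α → Set ℕ) :
    ∃ T, ∀ a, ∀ t ∈ s a, T < t → (s a).Infinite := by
  have bound : ∀ a, ∃ N, ∀ t ∈ s a, N < t → (s a).Infinite := by
    intro a
    by_cases hfin : (s a).Finite
    · obtain ⟨N, hN⟩ := hfin.bddAbove
      exact ⟨N, fun t ht hlt => absurd (hN ht) (not_le.mpr hlt)⟩
    · exact ⟨0, fun _ _ _ => hfin⟩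
  choose N hN using bound
  obtain ⟨T, hT⟩ := (Set.finite_range N).bddAbove
  exact ⟨T, fun a t ht hlt => hN a t ht (lt_of_le_of_lt (hT ⟨a, rfl⟩) hlt)⟩

theorem Journey.reachable {g H : SimpleGraph V} {ρ : Sym2 V → ℕ → Bool} {p q : V} {t₁ t₂ : ℕ}
    (j : Journey g ρ p q t₁ t₂)
    (hH : ∀ x y t, t₁ ≤ t → g.Adj x y → ρ s(x, y) t = true → H.Adj x y) :
    H.Reachable p q := by
  induction j with
  | single hadj hρ => exact (hH _ _ _ le_rfl hadj hρ).reachable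
  | cons hadj hρ hlt _ ih =>
    exact (hH _ _ _ le_rfl hadj hρ).reachable.trans
      (ih fun x y t ht => hH x y t (hlt.le.trans ht))

theorem eventual_underlying_connected [Fintype V] [Nonempty V]
    (g : SimpleGraph V) (ρ : Sym2 V → ℕ → Bool)
    (hjour : ∀ t : ℕ, ∀ p q : V, p ≠ q → ∃ t₁ t₂ : ℕ, t < t₁ ∧ Journey g ρ p q t₁ t₂) :
    (SimpleGraph.fromEdgeSet
      {e | e ∈ g.edgeSet ∧ {t : ℕ | ρ e t = true}.Infinite}).Connected := by
  obtain ⟨T, hT⟩ := exists_forall_infinite_of_lt_mem fun e => {t : ℕ | ρ e t = true}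
  refine ⟨fun p q => ?_⟩
  rcases eq_or_ne p q with rfl | hpq
  · exact .refl p
  obtain ⟨t₁, t₂, hTt₁, j⟩ := hjour T p q hpq
  refine j.reachable fun x y t ht hadj hρ => ?_
  exact (fromEdgeSet_adj _).mpr ⟨⟨hadj, hT _ t hρ (hTt₁.trans_le ht)⟩, hadj.ne⟩
end
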